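/- Let U_1, ..., U_4 be i.i.d. uniform on [0,1] and W_i = 2 - 3|U_{i+1} - U_i| - 6 U_i(1 - U_i) for i = 1, 2, 3. Then E[W_1 W_2 W_3 (W_1 + W_2 + W_3)] = -37/700. -/

import Mathlib

/-! Independence makes the law of `((U₁, U₂), (U₀, U₃))` a product of uniform laws, so the
expectation is an iterated integral over the unit cube. Integrating out the end variables `U₀`
and `U₃` first leaves a polynomial in `U₁`, `U₂` and `|U₂ - U₁|`. Every integral along the way is
of a polynomial in `x` and `|x - t|` over `[0, 1]`; splitting at `t` turns it into two
polynomial integrals, which are evaluated by linearity and `∫ x ^ n`. -/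

open MeasureTheory ProbabilityTheory Set

lemma ProbabilityTheory.iIndepFun.map_prodMk_prodMk_eq_prod {Ω ι β : Type*}
    [MeasurableSpace Ω] [MeasurableSpace β] {μ : Measure Ω} [IsProbabilityMeasure μ]
    {f : ι → Ω → β} (h : iIndepFun f μ)
    (hf : ∀ i, Measurable (f i)) {i j k l : ι} (hij : i ≠ j) (hik : i ≠ k) (hil : i ≠ l)
    (hjk : j ≠ k) (hjl : j ≠ l) (hkl : k ≠ l) :
    μ.map (fun ω => ((f i ω, f j ω), (f k ω, f l ω))) =
      ((μ.map (f i)).prod (μ.map (f j))).prod ((μ.map (f k)).prod (μ.map (f l))) := by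
  rw [(h.indepFun_prodMk_prodMk hf i j k l hik hil hjk hjl).map_prod_eq_prod_map_map
      (by fun_prop) (by fun_prop),
    (h.indepFun hij).map_prod_eq_prod_map_map (hf i).aemeasurable (hf j).aemeasurable,
    (h.indepFun hkl).map_prod_eq_prod_map_map (hf k).aemeasurable (hf l).aemeasurable]

lemma Continuous.integral_prod_prod_restrict {s : Set ℝ} (hs : IsCompact s)
    {F : (ℝ × ℝ) × (ℝ × ℝ) → ℝ} (hF : Continuous F) :
    ∫ p, F p ∂(((volume.restrict s).prod (volume.restrict s)).prod
        ((volume.restrict s).prod (volume.restrict s))) =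
      ∫ b in s, ∫ c in s, ∫ a in s, ∫ d in s, F ((b, c), (a, d)) := by
  have hF' : Integrable F (((volume.restrict s).prod (volume.restrict s)).prod
      ((volume.restrict s).prod (volume.restrict s))) := by
    simp only [Measure.prod_restrict]
    exact hF.continuousOn.integrableOn_compact ((hs.prod hs).prod (hs.prod hs))
  rw [integral_prod _ hF', integral_prod _ hF'.integral_prod_left]
  refine integral_congr_ae (ae_of_all _ fun b => integral_congr_ae (ae_of_all _ fun c => ?_))
  refine integral_prod _ ?_
  rw [Measure.prod_restrict]
  exact (hF.comp (Continuous.prodMk_right _)).continuousOn.integrableOn_compact (hs.prod hs)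

lemma setIntegral_mul_add_mul_sq {X : Type*} [TopologicalSpace X] [MeasurableSpace X]
    [OpensMeasurableSpace X] [T2Space X] {μ : Measure X} [IsFiniteMeasureOnCompacts μ] {s : Set X}
    (hs : IsCompact s) {f : X → ℝ} (hf : Continuous f) (α β : ℝ) :
    ∫ x in s, (α * f x + β * f x ^ 2) ∂μ = α * ∫ x in s, f x ∂μ + β * ∫ x in s, f x ^ 2 ∂μ := by
  rw [integral_add ((hf.continuousOn.integrableOn_compact hs).const_mul α)
      ((by fun_prop : Continuous fun x => f x ^ 2).continuousOn.integrableOn_compact hs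
        |>.const_mul β),
    integral_const_mul, integral_const_mul]

lemma integral_Icc_comp_abs_sub {f : ℝ → ℝ → ℝ} (hf : Continuous (Function.uncurry f)) {t : ℝ}
    (ht : t ∈ Icc (0:ℝ) 1) :
    ∫ x in Icc 0 1, f x |x - t| = (∫ x in 0..t, f x (t - x)) + ∫ x in t..1, f x (x - t) := by
  have hg : Continuous fun x => f x |x - t| := by fun_prop
  rw [integral_Icc_eq_integral_Ioc, ← intervalIntegral.integral_of_le zero_le_one,
    ← intervalIntegral.integral_add_adjacent_intervals (hg.intervalIntegrable 0 t)
      (hg.intervalIntegrable t 1)]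
  congr 1
  · refine intervalIntegral.integral_congr fun x hx => ?_
    rw [uIcc_of_le ht.1] at hx
    simp only [abs_of_nonpos (sub_nonpos.2 hx.2), neg_sub]
  · refine intervalIntegral.integral_congr fun x hx => ?_
    rw [uIcc_of_le ht.2] at hx
    simp only [abs_of_nonneg (sub_nonneg.2 hx.1)]

/-- `simp` cannot use `intervalIntegral.integral_const_mul` on `r * x`: the pattern `?f x` does
not match a bare bound variable. -/
lemma intervalIntegral.integral_const_mul_id (r a b : ℝ) :
    ∫ x in a..b, r * x = r * ((b ^ 2 - a ^ 2) / 2) := by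
  rw [intervalIntegral.integral_const_mul, integral_id]

noncomputable def W (x y : ℝ) : ℝ := 2 - 3 * |y - x| - 6 * x * (1 - x)

@[fun_prop]
lemma continuous_W {α : Type*} [TopologicalSpace α] {f g : α → ℝ} (hf : Continuous f)
    (hg : Continuous g) : Continuous fun a => W (f a) (g a) := by
  unfold W
  fun_prop

lemma integral_W_right {x : ℝ} (hx : x ∈ Icc (0:ℝ) 1) :
    ∫ y in Icc 0 1, W x y = 3 * x ^ 2 - 3 * x + 1 / 2 := by
  simp only [W]
  rw [integral_Icc_comp_abs_sub (f := fun _ s => 2 - 3 * s - 6 * x * (1 - x)) (by fun_prop) hx]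
  ring_nf
  simp (disch := exact Continuous.intervalIntegrable (by fun_prop) _ _) only
    [intervalIntegral.integral_add, intervalIntegral.integral_sub,
      intervalIntegral.integral_mul_const, integral_id, intervalIntegral.integral_const,
      smul_eq_mul]
  ring

lemma integral_W_sq_right {x : ℝ} (hx : x ∈ Icc (0:ℝ) 1) :
    ∫ y in Icc 0 1, W x y ^ 2 = 3 * x ^ 2 - 3 * x + 1 := by
  simp only [W]
  rw [integral_Icc_comp_abs_sub (f := fun _ s => (2 - 3 * s - 6 * x * (1 - x)) ^ 2)
    (by fun_prop) hx]
  ring_nf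
  simp (disch := exact Continuous.intervalIntegrable (by fun_prop) _ _) only
    [intervalIntegral.integral_add, intervalIntegral.integral_sub,
      intervalIntegral.integral_mul_const, intervalIntegral.integral_const_mul_id, integral_pow,
      integral_id, intervalIntegral.integral_const, smul_eq_mul]
  ring

lemma integral_W_left {y : ℝ} (hy : y ∈ Icc (0:ℝ) 1) :
    ∫ x in Icc 0 1, W x y = -(3 * y ^ 2 - 3 * y + 1 / 2) := by
  simp only [W, abs_sub_comm y]
  rw [integral_Icc_comp_abs_sub (f := fun x s => 2 - 3 * s - 6 * x * (1 - x)) (by fun_prop) hy]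
  ring_nf
  simp (disch := exact Continuous.intervalIntegrable (by fun_prop) _ _) only
    [intervalIntegral.integral_add, intervalIntegral.integral_sub,
      intervalIntegral.integral_mul_const, integral_pow, integral_id,
      intervalIntegral.integral_const, smul_eq_mul]
  ring

lemma integral_W_sq_left {y : ℝ} (hy : y ∈ Icc (0:ℝ) 1) :
    ∫ x in Icc 0 1, W x y ^ 2 = 6 / 5 - 3 * y - 3 * y ^ 2 + 12 * y ^ 3 - 6 * y ^ 4 := by
  simp only [W, abs_sub_comm y]
  rw [integral_Icc_comp_abs_sub (f := fun x s => (2 - 3 * s - 6 * x * (1 - x)) ^ 2)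
    (by fun_prop) hy]
  ring_nf
  simp (disch := exact Continuous.intervalIntegrable (by fun_prop) _ _) only
    [intervalIntegral.integral_add, intervalIntegral.integral_sub,
      intervalIntegral.integral_mul_const, intervalIntegral.integral_const_mul_id,
      intervalIntegral.integral_const_mul, integral_pow, integral_id,
      intervalIntegral.integral_const, smul_eq_mul]
  ring

lemma integral_W_ends {b c : ℝ} (hb : b ∈ Icc (0:ℝ) 1) (hc : c ∈ Icc (0:ℝ) 1) :
    ∫ a in Icc 0 1, ∫ d in Icc 0 1, W a b * W b c * W c d * (W a b + W b c + W c d) =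
      (6 / 5 - 3 * b - 3 * b ^ 2 + 12 * b ^ 3 - 6 * b ^ 4) * W b c * (3 * c ^ 2 - 3 * c + 1 / 2)
        - (3 * b ^ 2 - 3 * b + 1 / 2) * W b c ^ 2 * (3 * c ^ 2 - 3 * c + 1 / 2)
        - (3 * b ^ 2 - 3 * b + 1 / 2) * W b c * (3 * c ^ 2 - 3 * c + 1) := by
  have hd (a : ℝ) : ∫ d in Icc 0 1, W a b * W b c * W c d * (W a b + W b c + W c d) =
      (W b c ^ 2 * (3 * c ^ 2 - 3 * c + 1 / 2) + W b c * (3 * c ^ 2 - 3 * c + 1)) * W a b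
        + W b c * (3 * c ^ 2 - 3 * c + 1 / 2) * W a b ^ 2 := by
    calc _ = ∫ d in Icc 0 1, ((W a b ^ 2 * W b c + W a b * W b c ^ 2) * W c d
          + W a b * W b c * W c d ^ 2) := by
          congr 1; ext d; ring
      _ = _ := by
          rw [setIntegral_mul_add_mul_sq isCompact_Icc (by fun_prop), integral_W_right hc,
            integral_W_sq_right hc]
          ring
  simp_rw [hd]
  rw [setIntegral_mul_add_mul_sq isCompact_Icc (by fun_prop), integral_W_left hb,
    integral_W_sq_left hb]
  ring

lemma integral_W_middle {b : ℝ} (hb : b ∈ Icc (0:ℝ) 1) :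
    ∫ c in Icc 0 1,
      ((6 / 5 - 3 * b - 3 * b ^ 2 + 12 * b ^ 3 - 6 * b ^ 4) * W b c * (3 * c ^ 2 - 3 * c + 1 / 2)
        - (3 * b ^ 2 - 3 * b + 1 / 2) * W b c ^ 2 * (3 * c ^ 2 - 3 * c + 1 / 2)
        - (3 * b ^ 2 - 3 * b + 1 / 2) * W b c * (3 * c ^ 2 - 3 * c + 1)) =
      -1 / 5 + 39 / 20 * b - 9 / 2 * b ^ 2 - 219 / 10 * b ^ 3 + 2829 / 20 * b ^ 4 - 333 * b ^ 5
        + 405 * b ^ 6 - 252 * b ^ 7 + 63 * b ^ 8 := by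
  simp only [W]
  rw [integral_Icc_comp_abs_sub (f := fun c s =>
      (6 / 5 - 3 * b - 3 * b ^ 2 + 12 * b ^ 3 - 6 * b ^ 4) * (2 - 3 * s - 6 * b * (1 - b))
          * (3 * c ^ 2 - 3 * c + 1 / 2)
        - (3 * b ^ 2 - 3 * b + 1 / 2) * (2 - 3 * s - 6 * b * (1 - b)) ^ 2
          * (3 * c ^ 2 - 3 * c + 1 / 2)
        - (3 * b ^ 2 - 3 * b + 1 / 2) * (2 - 3 * s - 6 * b * (1 - b)) * (3 * c ^ 2 - 3 * c + 1))
      (by fun_prop) hb]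
  ring_nf
  simp (disch := exact Continuous.intervalIntegrable (by fun_prop) _ _) only
    [intervalIntegral.integral_add, intervalIntegral.integral_sub,
      intervalIntegral.integral_mul_const, intervalIntegral.integral_const_mul_id,
      intervalIntegral.integral_const_mul, integral_pow, integral_id,
      intervalIntegral.integral_const, smul_eq_mul]
  ring

lemma integral_W_outer :
    ∫ b in Icc (0:ℝ) 1, (-1 / 5 + 39 / 20 * b - 9 / 2 * b ^ 2 - 219 / 10 * b ^ 3
      + 2829 / 20 * b ^ 4 - 333 * b ^ 5 + 405 * b ^ 6 - 252 * b ^ 7 + 63 * b ^ 8) =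
      -(37 / 700) := by
  rw [integral_Icc_eq_integral_Ioc, ← intervalIntegral.integral_of_le zero_le_one]
  simp (disch := exact Continuous.intervalIntegrable (by fun_prop) _ _) only
    [intervalIntegral.integral_add, intervalIntegral.integral_sub,
      intervalIntegral.integral_const_mul_id, intervalIntegral.integral_const_mul, integral_pow,
      intervalIntegral.integral_const, smul_eq_mul]
  norm_num

lemma integral_W_chain :
    ∫ b in Icc (0:ℝ) 1, ∫ c in Icc (0:ℝ) 1, ∫ a in Icc (0:ℝ) 1, ∫ d in Icc (0:ℝ) 1,
      W a b * W b c * W c d * (W a b + W b c + W c d) = -(37 / 700) := by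
  rw [← integral_W_outer]
  refine setIntegral_congr_fun measurableSet_Icc fun b hb => ?_
  rw [← integral_W_middle hb]
  exact setIntegral_congr_fun measurableSet_Icc fun c hc => integral_W_ends hb hc

/-- If `U 0, U 1, U 2, U 3` are i.i.d. uniform on `[0,1]` and
`Wᵢ = 2 - 3|U (i+1) - U i| - 6 U i (1 - U i)` for `i = 0, 1, 2`,
then `E[W₁ W₂ W₃ (W₁ + W₂ + W₃)] = -37/700`. -/
theorem expectation_W1_W2_W3_sum
    {Ω : Type*} [MeasurableSpace Ω] (P : Measure Ω) [IsProbabilityMeasure P]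
    (U : Fin 4 → Ω → ℝ) (hmeas : ∀ i, Measurable (U i))
    (hindep : iIndepFun U P)
    (hunif : ∀ i, Measure.map (U i) P = volume.restrict (Set.Icc (0:ℝ) 1)) :
    ∫ ω, (2 - 3 * |U 1 ω - U 0 ω| - 6 * U 0 ω * (1 - U 0 ω))
        * (2 - 3 * |U 2 ω - U 1 ω| - 6 * U 1 ω * (1 - U 1 ω))
        * (2 - 3 * |U 3 ω - U 2 ω| - 6 * U 2 ω * (1 - U 2 ω))
        * ((2 - 3 * |U 1 ω - U 0 ω| - 6 * U 0 ω * (1 - U 0 ω))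
          + (2 - 3 * |U 2 ω - U 1 ω| - 6 * U 1 ω * (1 - U 1 ω))
          + (2 - 3 * |U 3 ω - U 2 ω| - 6 * U 2 ω * (1 - U 2 ω))) ∂P
      = -(37 / 700) := by
  set F : (ℝ × ℝ) × (ℝ × ℝ) → ℝ := fun p =>
    W p.2.1 p.1.1 * W p.1.1 p.1.2 * W p.1.2 p.2.2
      * (W p.2.1 p.1.1 + W p.1.1 p.1.2 + W p.1.2 p.2.2)
  have hF : Continuous F := by fun_prop
  have hlaw : P.map (fun ω => ((U 1 ω, U 2 ω), (U 0 ω, U 3 ω))) =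
      ((volume.restrict (Icc (0:ℝ) 1)).prod (volume.restrict (Icc (0:ℝ) 1))).prod
        ((volume.restrict (Icc (0:ℝ) 1)).prod (volume.restrict (Icc (0:ℝ) 1))) := by
    rw [hindep.map_prodMk_prodMk_eq_prod hmeas (by decide) (by decide) (by decide) (by decide)
      (by decide) (by decide)]
    simp only [hunif]
  calc _ = ∫ p, F p ∂(P.map fun ω => ((U 1 ω, U 2 ω), (U 0 ω, U 3 ω))) :=
        (integral_map (by fun_prop) hF.aestronglyMeasurable).symm
    _ = -(37 / 700) := by
        rw [hlaw, hF.integral_prod_prod_restrict isCompact_Icc]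
        exact integral_W_chain
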